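/- Let A ∈ GL_2(ℝ) satisfy ‖A‖ < 1/3 and |det A| > 1/10. Then dimaff(A, A, Aᵀ, Aᵀ) > 1. In fact the pressure satisfies P(A, A, Aᵀ, Aᵀ; 1) ≥ log(4|det A|/‖A‖) > 0. -/

import Mathlib

open scoped BigOperators Kronecker

noncomputable section

namespace PaperProj

open Matrix

/-- The `j`-th singular value (`1`-indexed, in decreasing order) of a real square matrix:
the non-negative square roots of the eigenvalues of `AᵀA`, listed in decreasing order
with multiplicity. -/
noncomputable def sval {ι : Type*} [Fintype ι] [DecidableEq ι] (A : Matrix ι ι ℝ) (j : ℕ) : ℝ :=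
  ((((Finset.univ.val.map fun i : ι =>
      Real.sqrt ((Matrix.isHermitian_iff_isSymm.mpr (Matrix.isSymm_transpose_mul_self A)).eigenvalues i)).sort
    (· ≤ ·)).reverse).getD (j - 1) 0)

/-- Falconer's singular value function `φ^s`. -/
noncomputable def svf {ι : Type*} [Fintype ι] [DecidableEq ι] (s : ℝ) (A : Matrix ι ι ℝ) : ℝ :=
  if s ≤ (Fintype.card ι : ℝ) then
    (∏ j ∈ Finset.Icc 1 ⌊s⌋₊, sval A j) * sval A ⌈s⌉₊ ^ (s - (⌊s⌋₊ : ℝ))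
  else |A.det| ^ (s / (Fintype.card ι : ℝ))

/-- The product `A_{i_1} ⋯ A_{i_n}` associated to a word `i = i_1 ⋯ i_n`. -/
noncomputable def wordProd {ι : Type*} [Fintype ι] [DecidableEq ι] {N : ℕ}
    (A : Fin N → Matrix ι ι ℝ) {n : ℕ} (i : Fin n → Fin N) : Matrix ι ι ℝ :=
  (List.ofFn fun j => A (i j)).prod

/-- The affinity dimension: `inf {s > 0 : ∑_{n≥1} ∑_{|i|=n} φ^s(A_i) < ∞}`. -/
noncomputable def affDim {ι : Type*} [Fintype ι] [DecidableEq ι] {N : ℕ}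
    (A : Fin N → Matrix ι ι ℝ) : ℝ :=
  sInf {s : ℝ | 0 < s ∧
    Summable fun n : ℕ => ∑ i : Fin (n + 1) → Fin N, svf s (wordProd A i)}

/-- The pressure `P(A_1,…,A_N; s) = lim_n (1/n) log ∑_{|i|=n} φ^s(A_i)` (the limit exists by
subadditivity, so it equals the limsup used here). -/
noncomputable def pressure {ι : Type*} [Fintype ι] [DecidableEq ι] {N : ℕ}
    (A : Fin N → Matrix ι ι ℝ) (s : ℝ) : ℝ :=
  Filter.limsup
    (fun n : ℕ => Real.log (∑ i : Fin n → Fin N, svf s (wordProd A i)) / n) Filter.atTop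

/-- The tuple `(A_1,…,A_N)` is contracting with respect to some norm on `ℝ^d`. -/
def IsContractingTuple {ι : Type*} [Fintype ι] [DecidableEq ι] {N : ℕ}
    (A : Fin N → Matrix ι ι ℝ) : Prop :=
  ∃ (ν : Seminorm ℝ (ι → ℝ)) (c : ℝ), (∀ x : ι → ℝ, x ≠ 0 → 0 < ν x) ∧ c < 1 ∧
    ∀ (i : Fin N) (x : ι → ℝ), ν ((A i).mulVec x) ≤ c * ν x

/-- Irreducibility: no nonzero proper subspace is preserved by every map of the tuple. -/
def IrreducibleTuple {N : ℕ} {V : Type*} [AddCommGroup V] [Module ℝ V]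
    (f : Fin N → V →ₗ[ℝ] V) : Prop :=
  ∀ W : Submodule ℝ V, (∀ i, W.map (f i) ≤ W) → W = ⊥ ∨ W = ⊤

/-- Strong irreducibility: no finite union of nonzero proper subspaces is preserved by
every map of the tuple. -/
def StronglyIrreducibleTuple {N : ℕ} {V : Type*} [AddCommGroup V] [Module ℝ V]
    (f : Fin N → V →ₗ[ℝ] V) : Prop :=
  ∀ (m : ℕ) (W : Fin (m + 1) → Submodule ℝ V), (∀ j, W j ≠ ⊥) → (∀ j, W j ≠ ⊤) →
    ¬ (∀ i, (f i) '' (⋃ j, (W j : Set V)) = ⋃ j, (W j : Set V))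

/-- The linear map induced on the `k`-th exterior power by a linear endomorphism. -/
noncomputable def extPowMap {V : Type*} [AddCommGroup V] [Module ℝ V] (k : ℕ)
    (f : V →ₗ[ℝ] V) : ⋀[ℝ]^k V →ₗ[ℝ] ⋀[ℝ]^k V :=
  (ExteriorAlgebra.map f).toLinearMap.restrict (p := ⋀[ℝ]^k V) (q := ⋀[ℝ]^k V)
    (by
      intro x hx
      have h : Submodule.map (ExteriorAlgebra.map f).toLinearMap (⋀[ℝ]^k V) ≤ ⋀[ℝ]^k V := by
        conv_lhs => rw [← ExteriorAlgebra.ιMulti_span_fixedDegree]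
        rw [Submodule.map_span, Submodule.span_le]
        rintro y ⟨z, ⟨m, rfl⟩, rfl⟩
        rw [AlgHom.toLinearMap_apply, ExteriorAlgebra.map_apply_ιMulti]
        rw [← ExteriorAlgebra.ιMulti_span_fixedDegree]
        exact Submodule.subset_span ⟨_, rfl⟩
      exact h ⟨x, hx, rfl⟩)

instance extPowFree {V : Type*} [AddCommGroup V] [Module ℝ V] (k : ℕ) :
    Module.Free ℝ (⋀[ℝ]^k V) := Module.Free.of_divisionRing ℝ _

instance extPowFinite {V : Type*} [AddCommGroup V] [Module ℝ V] [Module.Finite ℝ V] (k : ℕ) :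
    Module.Finite ℝ (⋀[ℝ]^k V) := by
  rw [Module.Finite.iff_fg]
  refine Submodule.FG.pow ?_ k
  rw [← Submodule.map_top (ExteriorAlgebra.ι ℝ (M := V))]
  exact Submodule.FG.map _ Module.Finite.fg_top

/-- The tuple `(A_1,…,A_N)` is `k`-irreducible: the induced tuple on the `k`-th exterior
power is irreducible. -/
def kIrreducible {ι : Type*} [Fintype ι] [DecidableEq ι] {N : ℕ} (k : ℕ)
    (A : Fin N → Matrix ι ι ℝ) : Prop :=
  IrreducibleTuple fun i => extPowMap k (Matrix.toLin' (A i))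

/-- A linear endomorphism of a finite-dimensional real vector space is proximal if it has a
simple eigenvalue whose modulus strictly exceeds the modulus of every other (complex)
eigenvalue. -/
def ProximalEnd {V : Type*} [AddCommGroup V] [Module ℝ V] [Module.Finite ℝ V]
    [Module.Free ℝ V] (f : V →ₗ[ℝ] V) : Prop :=
  ∃ lam : ℂ, ((LinearMap.charpoly f).map (algebraMap ℝ ℂ)).roots.count lam = 1 ∧
    ∀ mu ∈ ((LinearMap.charpoly f).map (algebraMap ℝ ℂ)).roots, mu ≠ lam →
      ‖mu‖ < ‖lam‖

/-- The tuple `(A_1,…,A_N)` is proximal of all orders: for each `k = 1,…,d`, some word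
product of the induced tuple on the `k`-th exterior power is a proximal linear map. -/
def ProximalAllOrders {ι : Type*} [Fintype ι] [DecidableEq ι] {N : ℕ}
    (A : Fin N → Matrix ι ι ℝ) : Prop :=
  ∀ k : ℕ, 1 ≤ k → k ≤ Fintype.card ι →
    ∃ (n : ℕ) (i : Fin (n + 1) → Fin N),
      ProximalEnd (extPowMap k (Matrix.toLin' (wordProd A i)))

/-- The least number of open `δ`-balls needed to cover `Y` (when `Y` admits a finite cover;
junk value `0` otherwise). -/
noncomputable def coverNum {E : Type*} [PseudoMetricSpace E] (Y : Set E) (δ : ℝ) : ℕ :=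
  sInf {n : ℕ | ∃ t : Finset E, t.card = n ∧ Y ⊆ ⋃ x ∈ t, Metric.ball x δ}

/-- The upper box dimension `limsup_{δ→0⁺} log N(Y,δ) / log (1/δ)`. -/
noncomputable def upperBoxDim {E : Type*} [PseudoMetricSpace E] (Y : Set E) : ℝ :=
  Filter.limsup (fun δ : ℝ => Real.log (coverNum Y δ) / Real.log (1 / δ))
    (nhdsWithin 0 (Set.Ioi 0))

/-- The operator norm of a matrix with respect to the Euclidean norm. -/
noncomputable def opNorm {ι : Type*} [Fintype ι] [DecidableEq ι] (A : Matrix ι ι ℝ) : ℝ :=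
  ‖(Matrix.toEuclideanCLM (𝕜 := ℝ) A : EuclideanSpace ℝ ι →L[ℝ] EuclideanSpace ℝ ι)‖

/-!
For a `2 × 2` matrix `B` the singular values satisfy `σ₁ σ₂ = |det B|` and `σ₂ ≤ σ₁ ≤ ‖B‖`, hence
`|det B| ^ (1/2) ≤ σ₁(B) = φ¹(B)` and, more generally, `|det B| ^ (s/2) ≤ φ^s(B)` for `0 ≤ s ≤ 2`.
Every word of length `n` in `A, A, Aᵀ, Aᵀ` has determinant of modulus `|det A|ⁿ` and norm at most
`‖A‖ⁿ`. As `|det A| ≤ ‖A‖²`, we get `(|det A|/‖A‖)ⁿ ≤ |det A| ^ (n/2) ≤ φ¹`, and summing over the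
`4ⁿ` words bounds the pressure at `1` from below by `log (4 |det A| / ‖A‖)`. For the affinity
dimension: `|det A| > 1/10` gives `4 |det A| ^ (s/2) ≥ 1` for `s ≤ 6/5`, so the series defining
`dimaff` diverges for all `s < 6/5`, while at `s = 3` it is geometric with ratio
`4 |det A| ^ (3/2) < 1`, because `|det A| ≤ ‖A‖² < 1/9`.
-/

open Filter

section General

variable {ι : Type*} [Fintype ι] [DecidableEq ι]

lemma sval_nonneg (B : Matrix ι ι ℝ) (j : ℕ) : 0 ≤ sval B j := by
  rw [sval, List.getD_eq_getElem?_getD]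
  cases h : (_ : List ℝ)[j - 1]? with
  | none => exact le_rfl
  | some x =>
    obtain ⟨i, -, rfl⟩ := Multiset.mem_map.mp <| (Multiset.mem_sort _).mp <|
      List.mem_reverse.mp (List.mem_of_getElem? h)
    exact Real.sqrt_nonneg _

lemma svf_nonneg (s : ℝ) (B : Matrix ι ι ℝ) : 0 ≤ svf s B := by
  unfold svf
  split_ifs
  · exact mul_nonneg (Finset.prod_nonneg fun j _ => sval_nonneg B j)
      (Real.rpow_nonneg (sval_nonneg B _) _)
  · positivity

lemma svf_of_card_lt {s : ℝ} (hs : (Fintype.card ι : ℝ) < s) (B : Matrix ι ι ℝ) :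
    svf s B = |B.det| ^ (s / Fintype.card ι) := by
  rw [svf, if_neg hs.not_ge]

lemma svf_of_le_card {s : ℝ} (hs0 : 0 ≤ s) (hs : s ≤ Fintype.card ι) (B : Matrix ι ι ℝ) :
    svf s B = (∏ j ∈ Finset.Icc 1 ⌊s⌋₊, sval B j) * sval B (⌊s⌋₊ + 1) ^ (s - ⌊s⌋₊) := by
  rw [svf, if_pos hs]
  rcases (Nat.floor_le_ceil s).eq_or_lt with h | h
  · have : s = ⌊s⌋₊ := le_antisymm (h ▸ Nat.le_ceil s) (Nat.floor_le hs0)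
    rw [← this, sub_self, Real.rpow_zero, Real.rpow_zero]
  · rw [le_antisymm (Nat.ceil_le_floor_add_one s) h]

lemma svf_one [Nonempty ι] (B : Matrix ι ι ℝ) : svf 1 B = sval B 1 := by
  rw [svf_of_le_card zero_le_one (by exact_mod_cast Fintype.card_pos)]
  simp

def gramEigenvalues (B : Matrix ι ι ℝ) : ι → ℝ :=
  (isHermitian_iff_isSymm.mpr (isSymm_transpose_mul_self B)).eigenvalues

lemma gramEigenvalues_nonneg (B : Matrix ι ι ℝ) (i : ι) : 0 ≤ gramEigenvalues B i :=
  (posSemidef_conjTranspose_mul_self B).eigenvalues_nonneg i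

lemma prod_gramEigenvalues (B : Matrix ι ι ℝ) : ∏ i, gramEigenvalues B i = B.det ^ 2 := by
  have h := (isHermitian_iff_isSymm.mpr (isSymm_transpose_mul_self B)).det_eq_prod_eigenvalues
  simp only [det_mul, det_transpose, RCLike.ofReal_real_eq_id, id] at h
  rw [gramEigenvalues, ← h, sq]

lemma gramEigenvalues_le_opNorm_sq (B : Matrix ι ι ℝ) (i : ι) :
    gramEigenvalues B i ≤ opNorm B ^ 2 := by
  set hM := isHermitian_iff_isSymm.mpr (isSymm_transpose_mul_self B)
  set v := hM.eigenvectorBasis i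
  have hv : ‖v‖ = 1 := hM.eigenvectorBasis.orthonormal.1 i
  have heig : gramEigenvalues B i = ‖toEuclideanCLM (𝕜 := ℝ) B v‖ ^ 2 := by
    rw [gramEigenvalues, hM.eigenvalues_eq, ← real_inner_self_eq_norm_sq,
      EuclideanSpace.inner_eq_star_dotProduct]
    simp [ofLp_toEuclideanCLM, ← mulVec_mulVec, dotProduct_mulVec, vecMul_transpose]
    rfl
  rw [heig]
  gcongr
  calc ‖toEuclideanCLM (𝕜 := ℝ) B v‖ ≤ ‖toEuclideanCLM (𝕜 := ℝ) B‖ * ‖v‖ :=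
        (toEuclideanCLM (𝕜 := ℝ) B).le_opNorm v
    _ = opNorm B := by rw [hv, mul_one, opNorm]

lemma opNorm_transpose (B : Matrix ι ι ℝ) : opNorm Bᵀ = opNorm B := by
  rw [opNorm, ← conjTranspose_eq_transpose_of_trivial, ← star_eq_conjTranspose, map_star,
    ContinuousLinearMap.star_eq_adjoint, LinearIsometryEquiv.norm_map, opNorm]

section Words

variable {N : ℕ} (A : Fin N → Matrix ι ι ℝ)

lemma det_wordProd {n : ℕ} (i : Fin n → Fin N) :
    (wordProd A i).det = ∏ j, (A (i j)).det := by
  rw [wordProd, ← coe_detMonoidHom, map_list_prod, List.map_ofFn, List.prod_ofFn]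
  rfl

lemma abs_det_wordProd {D : ℝ} (hD : ∀ k, |(A k).det| = D) {n : ℕ} (i : Fin n → Fin N) :
    |(wordProd A i).det| = D ^ n := by
  simp [det_wordProd, Finset.abs_prod, hD]

lemma opNorm_wordProd_le [Nonempty ι] {K : ℝ} (hK : ∀ k, opNorm (A k) ≤ K) {n : ℕ}
    (i : Fin n → Fin N) : opNorm (wordProd A i) ≤ K ^ n := by
  rw [opNorm, wordProd, map_list_prod, List.map_ofFn]
  refine (List.norm_prod_le _).trans ?_
  rw [List.map_ofFn, List.prod_ofFn]
  simpa using
    Finset.prod_le_prod (s := Finset.univ) (fun j _ => norm_nonneg _) fun j _ => hK (i j)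

end Words

end General

lemma Multiset.sort_pair {α : Type*} [LinearOrder α] (a b : α) :
    Multiset.sort {a, b} (· ≤ ·) = [min a b, max a b] := by
  refine List.Perm.eq_of_pairwise' (r := (· ≤ ·)) (Multiset.pairwise_sort _ _)
    (by simp) ?_
  rw [← Multiset.coe_eq_coe, Multiset.sort_eq]
  rcases le_total a b with h | h
  · simp only [h, min_eq_left, max_eq_right]; rfl
  · simp only [h, min_eq_right, max_eq_left, Multiset.pair_comm a b]; rfl

section FinTwo

variable (B : Matrix (Fin 2) (Fin 2) ℝ)

lemma sval_fin_two :
    sval B 1 = max √(gramEigenvalues B 0) √(gramEigenvalues B 1) ∧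
    sval B 2 = min √(gramEigenvalues B 0) √(gramEigenvalues B 1) := by
  have hmap : (Finset.univ.val.map fun i : Fin 2 => √(gramEigenvalues B i)) =
      {√(gramEigenvalues B 0), √(gramEigenvalues B 1)} := rfl
  simp only [sval, gramEigenvalues] at hmap ⊢
  rw [hmap, Multiset.sort_pair]
  exact ⟨rfl, rfl⟩

lemma sval_two_le_sval_one : sval B 2 ≤ sval B 1 := by
  rw [(sval_fin_two B).1, (sval_fin_two B).2]
  exact min_le_max

lemma sval_one_mul_sval_two : sval B 1 * sval B 2 = |B.det| := by
  rw [(sval_fin_two B).1, (sval_fin_two B).2, max_mul_min,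
    ← Real.sqrt_mul (gramEigenvalues_nonneg B 0), ← Fin.prod_univ_two, prod_gramEigenvalues,
    Real.sqrt_sq_eq_abs]

lemma sval_one_le_opNorm : sval B 1 ≤ opNorm B := by
  rw [(sval_fin_two B).1]
  refine max_le ?_ ?_ <;>
    exact Real.sqrt_le_iff.mpr ⟨norm_nonneg _, gramEigenvalues_le_opNorm_sq B _⟩

lemma abs_det_le_sval_one_sq : |B.det| ≤ sval B 1 ^ 2 := by
  rw [← sval_one_mul_sval_two, sq]
  exact mul_le_mul_of_nonneg_left (sval_two_le_sval_one B) (sval_nonneg B 1)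

lemma sqrt_abs_det_le_sval_one : √|B.det| ≤ sval B 1 :=
  Real.sqrt_le_iff.mpr ⟨sval_nonneg B 1, abs_det_le_sval_one_sq B⟩

lemma abs_det_le_opNorm_sq : |B.det| ≤ opNorm B ^ 2 :=
  (abs_det_le_sval_one_sq B).trans (pow_le_pow_left₀ (sval_nonneg B 1) (sval_one_le_opNorm B) 2)

lemma abs_det_rpow_le_svf {s : ℝ} (hs0 : 0 ≤ s) (hs2 : s ≤ 2) :
    |B.det| ^ (s / 2) ≤ svf s B := by
  have hd : 0 ≤ |B.det| := abs_nonneg _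
  have hσ : |B.det| ^ (1 / 2 : ℝ) ≤ sval B 1 := by
    rw [← Real.sqrt_eq_rpow]; exact sqrt_abs_det_le_sval_one B
  rw [svf_of_le_card hs0 (by simpa using hs2)]
  rcases lt_or_ge s 1 with hs1 | hs1
  · rw [Nat.floor_eq_zero.mpr hs1]
    calc |B.det| ^ (s / 2) = (|B.det| ^ (1 / 2 : ℝ)) ^ s := by
          rw [← Real.rpow_mul hd]; ring_nf
      _ ≤ sval B 1 ^ s := by gcongr
      _ = _ := by simp
  rcases hs2.lt_or_eq with hs2 | rfl
  · rw [(Nat.floor_eq_iff (n := 1) hs0).mpr ⟨by simpa using hs1, by norm_num; linarith⟩]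
    calc |B.det| ^ (s / 2) = (|B.det| ^ (1 / 2 : ℝ)) ^ (2 - s) * |B.det| ^ (s - 1) := by
          rw [← Real.rpow_mul hd, ← Real.rpow_add' hd (by linarith)]; ring_nf
      _ ≤ sval B 1 ^ (2 - s) * |B.det| ^ (s - 1) := by gcongr
      _ = sval B 1 * sval B 2 ^ (s - 1) := by
          rw [← sval_one_mul_sval_two, Real.mul_rpow (sval_nonneg B 1) (sval_nonneg B 2),
            ← mul_assoc, ← Real.rpow_add' (sval_nonneg B 1) (by norm_num)]
          norm_num
      _ = _ := by simp
  · norm_num [Finset.prod_Icc_succ_top, sval_one_mul_sval_two]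

end FinTwo

lemma log_le_limsup_log_div {S : ℕ → ℝ} {a b : ℝ} (ha : 0 < a) (hlow : ∀ n, a ^ n ≤ S n)
    (hup : ∀ n, S n ≤ b ^ n) : Real.log a ≤ limsup (fun n => Real.log (S n) / n) atTop := by
  have hS : ∀ n, 0 < S n := fun n => (pow_pos ha n).trans_le (hlow n)
  refine le_limsup_of_frequently_le (Eventually.frequently ?_)
    (isBoundedUnder_of_eventually_le (a := Real.log b) ?_)
  · filter_upwards [eventually_gt_atTop 0] with n hn
    rw [le_div_iff₀ (by exact_mod_cast hn), mul_comm, ← Real.log_pow]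
    exact Real.log_le_log (pow_pos ha n) (hlow n)
  · filter_upwards [eventually_gt_atTop 0] with n hn
    rw [div_le_iff₀ (by exact_mod_cast hn), mul_comm, ← Real.log_pow]
    exact Real.log_le_log (hS n) (hup n)

section WordSums

variable {N : ℕ} {n : ℕ} {f : (Fin n → Fin N) → ℝ} {c : ℝ}

lemma pow_le_sum_words (h : ∀ i, c ^ n ≤ f i) : (N * c) ^ n ≤ ∑ i, f i := by
  calc (N * c) ^ n = ∑ _i : Fin n → Fin N, c ^ n := by simp [mul_pow]
    _ ≤ ∑ i, f i := Finset.sum_le_sum fun i _ => h i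

lemma sum_words_le_pow (h : ∀ i, f i ≤ c ^ n) : ∑ i, f i ≤ (N * c) ^ n := by
  calc ∑ i, f i ≤ ∑ _i : Fin n → Fin N, c ^ n := Finset.sum_le_sum fun i _ => h i
    _ = (N * c) ^ n := by simp [mul_pow]

end WordSums

section Dimension

variable {ι : Type*} [Fintype ι] [DecidableEq ι] {N : ℕ} (A : Fin N → Matrix ι ι ℝ) {s c : ℝ}

lemma log_le_pressure [NeZero N] {C : ℝ} (hc : 0 < c)
    (hlow : ∀ n (i : Fin n → Fin N), c ^ n ≤ svf s (wordProd A i))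
    (hup : ∀ n (i : Fin n → Fin N), svf s (wordProd A i) ≤ C ^ n) :
    Real.log (N * c) ≤ pressure A s :=
  log_le_limsup_log_div (mul_pos (by exact_mod_cast Nat.pos_of_neZero N) hc)
    (fun n => pow_le_sum_words (hlow n)) (fun n => sum_words_le_pow (hup n))

lemma summable_sum_svf (hc : 0 ≤ c) (hNc : N * c < 1)
    (h : ∀ n (i : Fin n → Fin N), svf s (wordProd A i) ≤ c ^ n) :
    Summable fun n : ℕ => ∑ i : Fin (n + 1) → Fin N, svf s (wordProd A i) := by
  refine Summable.of_nonneg_of_le (fun n => Finset.sum_nonneg fun i _ => svf_nonneg s _)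
    (fun n => sum_words_le_pow (h (n + 1))) ?_
  exact (summable_nat_add_iff 1).mpr (summable_geometric_of_lt_one (by positivity) hNc)

lemma not_summable_sum_svf (hNc : 1 ≤ N * c)
    (h : ∀ n (i : Fin n → Fin N), c ^ n ≤ svf s (wordProd A i)) :
    ¬ Summable fun n : ℕ => ∑ i : Fin (n + 1) → Fin N, svf s (wordProd A i) := fun hsum => by
  obtain ⟨n, hn⟩ := (hsum.tendsto_atTop_zero.eventually_lt_const one_pos).exists
  exact hn.not_ge ((one_le_pow₀ hNc).trans (pow_le_sum_words (h (n + 1))))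

-- `hne` excludes the junk value `sInf ∅ = 0`.
lemma le_affDim {t : ℝ}
    (hne : ∃ s, 0 < s ∧ Summable fun n : ℕ => ∑ i : Fin (n + 1) → Fin N, svf s (wordProd A i))
    (h : ∀ s, 0 < s → s < t →
      ¬ Summable fun n : ℕ => ∑ i : Fin (n + 1) → Fin N, svf s (wordProd A i)) :
    t ≤ affDim A :=
  le_csInf hne fun s ⟨hs, hsum⟩ => le_of_not_gt fun hst => h s hs hst hsum

end Dimension

section FinTwoTuples

variable {N : ℕ} {A : Fin N → Matrix (Fin 2) (Fin 2) ℝ} {D : ℝ}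

lemma log_mul_div_le_pressure_one [NeZero N] {K : ℝ} (hD0 : 0 < D)
    (hD : ∀ k, |(A k).det| = D) (hK : ∀ k, opNorm (A k) ≤ K) :
    Real.log (N * (D / K)) ≤ pressure A 1 := by
  have hsqrt : √D ≤ K :=
    hD 0 ▸ (sqrt_abs_det_le_sval_one (A 0)).trans ((sval_one_le_opNorm _).trans (hK 0))
  have hK0 : 0 < K := (Real.sqrt_pos.mpr hD0).trans_le hsqrt
  have hc : (D / K) ^ 2 ≤ D := by
    rw [div_pow, div_le_iff₀ (by positivity)]
    nlinarith [(Real.sqrt_le_iff.mp hsqrt).2]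
  refine log_le_pressure A (C := K) (div_pos hD0 hK0) (fun n i => ?_) (fun n i => ?_)
  · calc (D / K) ^ n ≤ √|(wordProd A i).det| := by
          rw [abs_det_wordProd A hD]
          refine Real.le_sqrt_of_sq_le ?_
          rw [← pow_mul, mul_comm, pow_mul]
          exact pow_le_pow_left₀ (by positivity) hc n
      _ ≤ svf 1 (wordProd A i) := svf_one (wordProd A i) ▸ sqrt_abs_det_le_sval_one _
  · rw [svf_one]
    exact (sval_one_le_opNorm _).trans (opNorm_wordProd_le A hK i)

lemma le_affDim_of_abs_det_eq {t : ℝ} (hD0 : 0 < D) (hD : ∀ k, |(A k).det| = D)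
    (hsum : N * D ^ (3 / 2 : ℝ) < 1) (ht : t ≤ 2) (hNt : 1 ≤ N * D ^ (t / 2)) :
    t ≤ affDim A := by
  have hD1 : D ≤ 1 := by
    by_contra! h
    have : D ^ (t / 2) < D ^ (3 / 2 : ℝ) := Real.rpow_lt_rpow_of_exponent_lt h (by linarith)
    nlinarith [Nat.cast_nonneg (α := ℝ) N]
  refine le_affDim A ⟨3, by norm_num, summable_sum_svf A (c := D ^ (3 / 2 : ℝ)) (by positivity)
    hsum fun n i => ?_⟩ fun s hs hst => not_summable_sum_svf A (c := D ^ (s / 2)) ?_ fun n i => ?_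
  · rw [svf_of_card_lt (by norm_num), abs_det_wordProd A hD, Fintype.card_fin,
      ← Real.rpow_pow_comm hD0.le]
    norm_num
  · refine hNt.trans (mul_le_mul_of_nonneg_left ?_ (Nat.cast_nonneg N))
    exact Real.rpow_le_rpow_of_exponent_ge hD0 hD1 (by linarith)
  · rw [Real.rpow_pow_comm hD0.le, ← abs_det_wordProd A hD]
    exact abs_det_rpow_le_svf _ hs.le (by linarith)

end FinTwoTuples

-- `4⁵ = 1024 > 10³`
lemma one_le_four_mul_rpow_three_fifths {D : ℝ} (hD : 1 / 10 < D) : 1 ≤ 4 * D ^ (3 / 5 : ℝ) := by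
  have hD0 : 0 < D := lt_trans (by norm_num) hD
  have h5 : (D ^ (3 / 5 : ℝ)) ^ 5 = D ^ 3 := by
    rw [← Real.rpow_natCast, ← Real.rpow_mul hD0.le]; norm_num
  have : (1 / 4 : ℝ) ^ 5 ≤ (D ^ (3 / 5 : ℝ)) ^ 5 := by
    rw [h5]; nlinarith [pow_le_pow_left₀ (by norm_num) hD.le 3]
  linarith [le_of_pow_le_pow_left₀ (by norm_num) (by positivity) this]

theorem statement12_general (A : Matrix (Fin 2) (Fin 2) ℝ)
    (hnorm : opNorm A < 1 / 3) (hdet : 1 / 10 < |A.det|) :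
    Real.log (4 * |A.det| / opNorm A) ≤ pressure ![A, A, Aᵀ, Aᵀ] 1 ∧
    0 < Real.log (4 * |A.det| / opNorm A) ∧
    1 < affDim ![A, A, Aᵀ, Aᵀ] := by
  set D := |A.det|
  have hD0 : 0 < D := lt_trans (by norm_num) hdet
  have hK0 : 0 < opNorm A :=
    (Real.sqrt_pos.mpr hD0).trans_le ((sqrt_abs_det_le_sval_one A).trans (sval_one_le_opNorm A))
  have hdet_letter : ∀ k, |(![A, A, Aᵀ, Aᵀ] k).det| = D := by
    intro k; fin_cases k <;> simp [D, det_transpose]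
  have hnorm_letter : ∀ k, opNorm (![A, A, Aᵀ, Aᵀ] k) ≤ opNorm A := by
    intro k; fin_cases k <;> simp [opNorm_transpose]
  have hD1 : D < 1 / 9 := (abs_det_le_opNorm_sq A).trans_lt (by nlinarith)
  have hsum : 4 * D ^ (3 / 2 : ℝ) < 1 := by
    have := Real.rpow_le_rpow_of_exponent_ge hD0 (by linarith) (by norm_num : (1 : ℝ) ≤ 3 / 2)
    rw [Real.rpow_one] at this
    linarith
  refine ⟨?_, Real.log_pos ((one_lt_div hK0).mpr (by linarith)), ?_⟩
  · simpa [mul_div_assoc] using log_mul_div_le_pressure_one hD0 hdet_letter hnorm_letter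
  · calc (1 : ℝ) < 6 / 5 := by norm_num
      _ ≤ affDim ![A, A, Aᵀ, Aᵀ] :=
        le_affDim_of_abs_det_eq hD0 hdet_letter (by simpa using hsum) (by norm_num)
          (by norm_num [one_le_four_mul_rpow_three_fifths hdet])

/-- If `‖A‖ < 1/3` and `|det A| > 1/10` then
`P(A, A, Aᵀ, Aᵀ; 1) ≥ log (4|det A|/‖A‖) > 0`, and `dimaff(A, A, Aᵀ, Aᵀ) > 1`. -/
theorem statement12 (A : Matrix (Fin 2) (Fin 2) ℝ) (hA : IsUnit A)
    (hnorm : opNorm A < 1 / 3) (hdet : 1 / 10 < |A.det|) :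
    Real.log (4 * |A.det| / opNorm A) ≤ pressure ![A, A, Aᵀ, Aᵀ] 1 ∧
    0 < Real.log (4 * |A.det| / opNorm A) ∧
    1 < affDim ![A, A, Aᵀ, Aᵀ] :=
  statement12_general A hnorm hdet

end PaperProj
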